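/- arXiv:2509.12563 — 2 statements merged into one kernel-verified Lean document; each statement's English description precedes it below -/
import Mathlib

section
/- Let T be a tree on n vertices and k ≥ 2 an integer. Then there exists a vertex set X ⊆ V(T) with |X| ≤ ⌊n/k⌋ such that every connected component of T − X has at most k − 1 vertices. -/
/-!
Call a connected set `B ⊆ S` a branch of `S` at `v ∈ B` if every edge from `B` to `S \ B` leaves
from `v`. A minimal branch with at least `k` vertices has no connected subset of `k` vertices
avoiding `v`: otherwise the component `C` of `B \ {v}` containing one is joined to the rest of `S`
only through edges to `v`, of which a forest has at most one, so `C` would be a smaller such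
branch. Deleting `v` cuts `B \ {v}` off from `S \ B`, and the `k` vertices of `B` pay for `v` in
the bound `⌊|S| / k⌋`; induct on `S \ B`.
-/

open SimpleGraph

namespace SimpleGraph

variable {V : Type*} {G : SimpleGraph V}

def IsConnectedSet (G : SimpleGraph V) (A : Set V) : Prop :=
  ∀ a ∈ A, ∀ b ∈ A, ∃ p : G.Walk a b, ∀ x ∈ p.support, x ∈ A

def componentIn (G : SimpleGraph V) (W : Set V) (a : V) : Set V :=
  {x | ∃ p : G.Walk a x, ∀ y ∈ p.support, y ∈ W}

section componentIn

variable {W : Set V} {a x y : V}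

lemma componentIn_subset : G.componentIn W a ⊆ W :=
  fun x ⟨p, hp⟩ => hp x p.end_mem_support

lemma mem_componentIn_self (ha : a ∈ W) : a ∈ G.componentIn W a :=
  ⟨Walk.nil, by simpa using ha⟩

lemma mem_componentIn_of_adj (hx : x ∈ G.componentIn W a) (hxy : G.Adj x y) (hy : y ∈ W) :
    y ∈ G.componentIn W a := by
  obtain ⟨p, hp⟩ := hx
  refine ⟨p.concat hxy, fun z hz => ?_⟩
  rw [Walk.support_concat, List.mem_append, List.mem_singleton] at hz
  rcases hz with hz | rfl
  exacts [hp z hz, hy]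

lemma mem_componentIn_of_mem_support {p : G.Walk a x} (hp : ∀ y ∈ p.support, y ∈ W)
    (hy : y ∈ p.support) : y ∈ G.componentIn W a := by
  classical
  exact ⟨p.takeUntil y hy, fun z hz => hp z (p.support_takeUntil_subset_support hy hz)⟩

lemma isConnectedSet_componentIn : G.IsConnectedSet (G.componentIn W a) := by
  rintro x ⟨p, hp⟩ y ⟨q, hq⟩
  refine ⟨p.reverse.append q, fun z hz => ?_⟩
  rw [Walk.mem_support_append_iff, Walk.support_reverse, List.mem_reverse] at hz
  rcases hz with hz | hz
  exacts [mem_componentIn_of_mem_support hp hz, mem_componentIn_of_mem_support hq hz]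

lemma IsConnectedSet.subset_componentIn {A : Set V} (hA : G.IsConnectedSet A) (ha : a ∈ A)
    (hAW : A ⊆ W) : A ⊆ G.componentIn W a := fun x hx =>
  let ⟨p, hp⟩ := hA a ha x hx
  ⟨p, fun y hy => hAW (hp y hy)⟩

end componentIn

lemma IsConnectedSet.subset_or_subset {D P Q : Set V} (hD : G.IsConnectedSet D)
    (hDPQ : D ⊆ P ∪ Q) (hPQ : ∀ x ∈ P, ∀ y ∈ Q, ¬ G.Adj x y) : D ⊆ P ∨ D ⊆ Q := by
  by_contra! ⟨hP, hQ⟩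
  obtain ⟨x, hxD, hxP⟩ := Set.not_subset.mp hP
  obtain ⟨y, hyD, hyQ⟩ := Set.not_subset.mp hQ
  obtain ⟨p, hp⟩ := hD y hyD x hxD
  obtain ⟨d, hd, hfst, hsnd⟩ :=
    p.exists_boundary_dart Qᶜ hyQ (not_not.mpr ((hDPQ hxD).resolve_left hxP))
  have hfstP : d.fst ∈ P :=
    (hDPQ (hp _ (p.dart_fst_mem_support_of_mem_darts hd))).resolve_right hfst
  exact hPQ _ hfstP _ (not_not.mp hsnd) d.adj

lemma IsAcyclic.eq_of_adj_of_adj {D : Set V} {v d₁ d₂ : V} (hG : G.IsAcyclic)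
    (hD : G.IsConnectedSet D) (hv : v ∉ D) (hd₁ : d₁ ∈ D) (hd₂ : d₂ ∈ D) (h₁ : G.Adj v d₁)
    (h₂ : G.Adj v d₂) : d₁ = d₂ := by
  classical
  obtain ⟨p, hp⟩ := hD d₁ hd₁ d₂ hd₂
  have hvp : v ∉ p.toPath.val.support := fun h => hv (hp v (p.support_toPath_subset_support h))
  have := hG.subsingleton_path v d₂
  have hlen := congrArg (fun q : G.Path v d₂ => q.val.length)
    (Subsingleton.elim ⟨.cons h₁ p.toPath, p.toPath.2.cons hvp⟩ (Path.singleton h₂))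
  simp only [Walk.length_cons, Path.singleton, Walk.length_nil, add_eq_right] at hlen
  exact Walk.eq_of_length_eq_zero hlen

lemma isConnectedSet_image_val_supp {W : Set V} (c : (G.induce W).ConnectedComponent) :
    G.IsConnectedSet (Subtype.val '' c.supp) := by
  classical
  rintro _ ⟨a, ha, rfl⟩ _ ⟨b, hb, rfl⟩
  obtain ⟨p⟩ := ConnectedComponent.exact (ha.trans hb.symm)
  refine ⟨p.map (Embedding.induce W).toHom, fun x hx => ?_⟩
  replace hx : x ∈ p.support.map (Embedding.induce (G := G) W).toHom := by
    rwa [← Walk.support_map]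
  rw [List.mem_map] at hx
  obtain ⟨z, hz, rfl⟩ := hx
  refine ⟨z, ?_, rfl⟩
  rw [ConnectedComponent.mem_supp_iff, ← ha]
  exact (ConnectedComponent.sound ⟨p.takeUntil z hz⟩).symm

def ConnectedSubsetsCardLT (G : SimpleGraph V) (k : ℕ) (A : Set V) : Prop :=
  ∀ D ⊆ A, G.IsConnectedSet D → D.ncard < k

lemma ConnectedSubsetsCardLT.mono {k : ℕ} {A A' : Set V} (h : G.ConnectedSubsetsCardLT k A)
    (hA' : A' ⊆ A) : G.ConnectedSubsetsCardLT k A' :=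
  fun D hD => h D (hD.trans hA')

lemma ConnectedSubsetsCardLT.union {k : ℕ} {P Q : Set V} (hP : G.ConnectedSubsetsCardLT k P)
    (hQ : G.ConnectedSubsetsCardLT k Q) (hPQ : ∀ x ∈ P, ∀ y ∈ Q, ¬ G.Adj x y) :
    G.ConnectedSubsetsCardLT k (P ∪ Q) := fun D hD hDconn =>
  (hDconn.subset_or_subset hD hPQ).elim (hP D · hDconn) (hQ D · hDconn)

structure IsBranch (G : SimpleGraph V) (S : Set V) (v : V) (B : Set V) : Prop where
  mem : v ∈ B
  subset : B ⊆ S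
  isConnectedSet : G.IsConnectedSet B
  eq_of_adj : ∀ b ∈ B, ∀ s ∈ S \ B, G.Adj b s → b = v

lemma isBranch_componentIn {S : Set V} {a : V} (ha : a ∈ S) :
    G.IsBranch S a (G.componentIn S a) :=
  ⟨mem_componentIn_self ha, componentIn_subset, isConnectedSet_componentIn,
    fun _ hb _ hs hbs => (hs.2 (mem_componentIn_of_adj hb hbs hs.1)).elim⟩

lemma IsAcyclic.exists_isBranch {S C : Set V} {v d : V} (hG : G.IsAcyclic)
    (hC : G.IsConnectedSet C) (hCS : C ⊆ S) (hd : d ∈ C) (hv : v ∉ C)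
    (hout : ∀ x ∈ C, ∀ s ∈ S \ C, G.Adj x s → s = v) : ∃ v', G.IsBranch S v' C := by
  by_cases hadj : ∃ x ∈ C, G.Adj x v
  · obtain ⟨x, hx, hxv⟩ := hadj
    refine ⟨x, hx, hCS, hC, fun b hb s hs hbs => ?_⟩
    rw [hout b hb s hs hbs] at hbs
    exact hG.eq_of_adj_of_adj hC hv hb hx hbs.symm hxv.symm
  · refine ⟨d, hd, hCS, hC, fun b hb s hs hbs => ?_⟩
    rw [hout b hb s hs hbs] at hbs
    exact (hadj ⟨b, hb, hbs⟩).elim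

lemma IsBranch.exists_isBranch_componentIn {S B : Set V} {v d : V} (hG : G.IsAcyclic)
    (hB : G.IsBranch S v B) (hd : d ∈ B \ {v}) :
    ∃ v', G.IsBranch S v' (G.componentIn (B \ {v}) d) := by
  have hCB : G.componentIn (B \ {v}) d ⊆ B \ {v} := componentIn_subset
  refine hG.exists_isBranch isConnectedSet_componentIn (fun x hx => hB.subset (hCB hx).1)
    (mem_componentIn_self hd) (fun hv => (hCB hv).2 rfl) fun x hx s hs hxs => ?_
  by_contra hsv
  by_cases hsB : s ∈ B
  · exact hs.2 (mem_componentIn_of_adj hx hxs ⟨hsB, hsv⟩)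
  · exact (hCB hx).2 (hB.eq_of_adj x (hCB hx).1 s ⟨hs.1, hsB⟩ hxs)

theorem IsAcyclic.exists_isBranch_connectedSubsetsCardLT [Finite V] {k : ℕ} {S B : Set V}
    {v : V} (hG : G.IsAcyclic) (hk : 0 < k) (hB : G.IsBranch S v B) (hkB : k ≤ B.ncard) :
    ∃ v' B', G.IsBranch S v' B' ∧ k ≤ B'.ncard ∧ G.ConnectedSubsetsCardLT k (B' \ {v'}) := by
  by_cases hsmall : G.ConnectedSubsetsCardLT k (B \ {v})
  · exact ⟨v, B, hB, hkB, hsmall⟩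
  obtain ⟨D, hDB, hD, hkD⟩ : ∃ D ⊆ B \ {v}, G.IsConnectedSet D ∧ k ≤ D.ncard := by
    simpa [ConnectedSubsetsCardLT] using hsmall
  obtain ⟨d, hd⟩ := Set.nonempty_of_ncard_ne_zero (by omega : D.ncard ≠ 0)
  obtain ⟨v', hC⟩ := hB.exists_isBranch_componentIn hG (hDB hd)
  have hCB : G.componentIn (B \ {v}) d ⊆ B \ {v} := componentIn_subset
  have : (G.componentIn (B \ {v}) d).ncard < B.ncard :=
    (Set.ncard_le_ncard hCB).trans_lt (Set.ncard_sdiff_singleton_lt_of_mem hB.mem)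
  exact hG.exists_isBranch_connectedSubsetsCardLT hk hC
    (hkD.trans (Set.ncard_le_ncard (hD.subset_componentIn hd hDB)))
termination_by B.ncard

theorem IsAcyclic.exists_connectedSubsetsCardLT_diff [Finite V] {k : ℕ} (hG : G.IsAcyclic)
    (hk : 0 < k) (S : Set V) :
    ∃ X : Set V, X.ncard ≤ S.ncard / k ∧ G.ConnectedSubsetsCardLT k (S \ X) := by
  by_cases hsmall : G.ConnectedSubsetsCardLT k S
  · exact ⟨∅, by simp, by simpa using hsmall⟩
  obtain ⟨A, hAS, hA, hkA⟩ : ∃ A ⊆ S, G.IsConnectedSet A ∧ k ≤ A.ncard := by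
    simpa [ConnectedSubsetsCardLT] using hsmall
  obtain ⟨a, ha⟩ := Set.nonempty_of_ncard_ne_zero (by omega : A.ncard ≠ 0)
  obtain ⟨v, B, hB, hkB, hBsmall⟩ := hG.exists_isBranch_connectedSubsetsCardLT hk
    (isBranch_componentIn (hAS ha))
    (hkA.trans (Set.ncard_le_ncard (hA.subset_componentIn ha hAS)))
  have hSB : (S \ B).ncard = S.ncard - B.ncard := Set.ncard_sdiff hB.subset
  have hBS : B.ncard ≤ S.ncard := Set.ncard_le_ncard hB.subset
  have : (S \ B).ncard < S.ncard := by omega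
  obtain ⟨X, hX, hXsmall⟩ := hG.exists_connectedSubsetsCardLT_diff hk (S \ B)
  refine ⟨insert v X, ?_, (hBsmall.union hXsmall ?_).mono ?_⟩
  · rw [Nat.le_div_iff_mul_le hk]
    calc (insert v X).ncard * k ≤ ((S \ B).ncard / k + 1) * k :=
          Nat.mul_le_mul_right k ((Set.ncard_insert_le v X).trans (by omega))
      _ = (S \ B).ncard / k * k + k := add_one_mul _ _
      _ ≤ S.ncard := by have := Nat.div_mul_le_self (S \ B).ncard k; omega
  · exact fun x hx y hy hxy => hx.2 (hB.eq_of_adj x hx.1 y hy.1 hxy)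
  · intro x hx
    simp only [Set.mem_sdiff, Set.mem_insert_iff, Set.mem_union, Set.mem_singleton_iff] at hx ⊢
    tauto
termination_by S.ncard

end SimpleGraph

/-- In a tree on `n` vertices, there is a set `X` of at most `⌊n/k⌋` vertices whose
deletion leaves only components with at most `k - 1` vertices. -/
theorem exists_small_deletion_set {V : Type*} [Fintype V] (T : SimpleGraph V)
    (hT : T.IsTree) (k : ℕ) (hk : 2 ≤ k) :
    ∃ X : Set V, X.ncard ≤ Nat.card V / k ∧
      ∀ c : (T.induce Xᶜ).ConnectedComponent, Nat.card c.supp ≤ k - 1 := by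
  obtain ⟨X, hXcard, hXsmall⟩ :=
    hT.isAcyclic.exists_connectedSubsetsCardLT_diff (by omega : 0 < k) Set.univ
  refine ⟨X, by rwa [Set.ncard_univ] at hXcard, fun c => ?_⟩
  have hc := hXsmall _ (by rintro _ ⟨x, -, rfl⟩; exact ⟨trivial, x.2⟩)
    (isConnectedSet_image_val_supp c)
  rw [Set.ncard_image_of_injective _ Subtype.val_injective, ← Nat.card_coe_set_eq] at hc
  omega
end

section
/- For k ≥ 2 and n ≥ 3, the cycle C_n satisfies α_k(C_n) = ((k−1)/k)·(n−1) if and only if n ≡ 1 (mod k). -/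
/-!
A generalized `k`-independent set `S` of `C_n` (with `0 < k ≤ n`) cannot contain `k` consecutive
vertices, since they would lie in one component of `C_n[S]`; so the complement of `S` meets
each of the `n` windows of `k` consecutive vertices, and a vertex lies in only `k` windows,
whence `n ≤ k · |Sᶜ|`, i.e. `|Sᶜ| ≥ (n - 1) / k + 1`. Deleting the multiples of `k` in
`{0, …, n - 1}` attains this bound, so `α_k(C_n) = (n - 1) - (n - 1) / k`. Comparing with
`((k - 1)/k)(n - 1)` shows equality exactly when `k ∣ n - 1`; the forward direction only needs
the integrality of `α_k(C_n)` and `gcd(k, k - 1) = 1`.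
-/

open SimpleGraph

/-- A set `S` is a generalized `k`-independent set in `G` if the induced subgraph `G[S]`
contains no tree on `k` vertices, equivalently every connected component of `G[S]`
has at most `k - 1` vertices. -/
def IsGenKIndep {V : Type*} (G : SimpleGraph V) (k : ℕ) (S : Set V) : Prop :=
  ∀ c : (G.induce S).ConnectedComponent, Nat.card c.supp ≤ k - 1

/-- The generalized `k`-independence number: the maximum size of a generalized
`k`-independent set. -/
noncomputable def alphaK {V : Type*} (G : SimpleGraph V) (k : ℕ) : ℕ :=
  sSup {m | ∃ S : Set V, IsGenKIndep G k S ∧ S.ncard = m}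

open Finset
open Fin.NatCast

lemma alphaK_eq_ncard {V : Type*} {G : SimpleGraph V} {k : ℕ} {S : Set V}
    (hS : IsGenKIndep G k S) (hmax : ∀ T, IsGenKIndep G k T → T.ncard ≤ S.ncard) :
    alphaK G k = S.ncard :=
  IsGreatest.csSup_eq ⟨⟨S, hS, rfl⟩, by rintro _ ⟨T, hT, rfl⟩; exact hmax T hT⟩

section Windows

variable {n k : ℕ} [NeZero n]

lemma induce_cycleGraph_reachable_add_natCast {S : Set (Fin n)} {a : Fin n} {i : ℕ}
    (hin : i < n) (hS : ∀ j ≤ i, a + (j : Fin n) ∈ S) :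
    ((cycleGraph n).induce S).Reachable ⟨a + (0 : ℕ), hS 0 i.zero_le⟩ ⟨a + i, hS i le_rfl⟩ := by
  induction i with
  | zero => rfl
  | succ i ih =>
    refine (ih (by omega) fun j hj => hS j (by omega)).trans (Adj.reachable ?_)
    show (cycleGraph n).Adj (a + i) (a + (i + 1 : ℕ))
    have hstep : a + ((i + 1 : ℕ) : Fin n) - (a + i) = 1 := by push_cast; abel
    rw [cycleGraph_adj', hstep, Fin.val_one', Nat.mod_eq_of_lt (by omega)]
    exact Or.inr rfl

lemma IsGenKIndep.exists_add_natCast_notMem {S : Set (Fin n)}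
    (hS : IsGenKIndep (cycleGraph n) k S) (hk : 0 < k) (hkn : k ≤ n) (a : Fin n) :
    ∃ i < k, a + (i : Fin n) ∉ S := by
  by_contra! hwin
  let c := ((cycleGraph n).induce S).connectedComponentMk ⟨a + (0 : ℕ), hwin 0 hk⟩
  let f : Fin k → c.supp := fun i => ⟨⟨a + i, hwin i i.isLt⟩, ConnectedComponent.eq.2
    (induce_cycleGraph_reachable_add_natCast (by omega) fun j hj => hwin j (by omega)).symm⟩
  have hf : f.Injective := by
    intro i j hij
    have hval := congrArg Fin.val (add_left_cancel (congrArg (fun v => v.1.1) hij))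
    simp only [Fin.val_natCast, Nat.mod_eq_of_lt (i.isLt.trans_le hkn),
      Nat.mod_eq_of_lt (j.isLt.trans_le hkn)] at hval
    exact Fin.ext hval
  have hcard := (Nat.card_le_card_of_injective f hf).trans (hS c)
  rw [Nat.card_fin] at hcard
  omega

lemma le_ncard_mul_of_forall_exists_add_natCast_mem {T : Set (Fin n)}
    (hT : ∀ a : Fin n, ∃ i < k, a + (i : Fin n) ∈ T) : n ≤ T.ncard * k := by
  classical
  calc n = #(univ : Finset (Fin n)) := by simp
    _ ≤ #(T.toFinset.biUnion fun t => (range k).image fun i : ℕ => t - (i : Fin n)) :=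
        card_le_card fun a _ => by
          obtain ⟨i, hi, ha⟩ := hT a
          simp only [mem_biUnion, Set.mem_toFinset, mem_image, mem_range]
          exact ⟨_, ha, i, hi, add_sub_cancel_right a _⟩
    _ ≤ #T.toFinset * k :=
        card_biUnion_le_card_mul _ _ _ fun _ _ => card_image_le.trans (card_range k).le
    _ = T.ncard * k := by rw [Set.ncard_eq_toFinset_card']

lemma IsGenKIndep.le_ncard_compl_mul {S : Set (Fin n)} (hS : IsGenKIndep (cycleGraph n) k S)
    (hk : 0 < k) (hkn : k ≤ n) : n ≤ Sᶜ.ncard * k :=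
  le_ncard_mul_of_forall_exists_add_natCast_mem (hS.exists_add_natCast_notMem hk hkn)

end Windows

section Multiples

variable {n k : ℕ}

lemma Fin.val_eq_add_one_or_eq_zero_of_val_sub_eq_one {x y : Fin n} (h : (y - x).val = 1) :
    y.val = x.val + 1 ∨ y.val = 0 := by
  rcases le_or_gt x y with hxy | hxy
  · rw [Fin.sub_val_of_le hxy] at h
    omega
  · rw [Fin.coe_sub_iff_lt.2 hxy] at h
    have := x.isLt
    omega

lemma div_eq_div_of_cycleGraph_adj {x y : Fin n} (hxy : (cycleGraph n).Adj x y)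
    (hx : ¬k ∣ x.val) (hy : ¬k ∣ y.val) : x.val / k = y.val / k := by
  have step : ∀ {u v : Fin n}, (v - u).val = 1 → ¬k ∣ v.val → u.val / k = v.val / k := by
    intro u v huv hv
    rcases Fin.val_eq_add_one_or_eq_zero_of_val_sub_eq_one huv with h | h
    · rw [h, Nat.succ_div_of_not_dvd (h ▸ hv)]
    · exact absurd (h ▸ dvd_zero k) hv
  rcases cycleGraph_adj'.1 hxy with h | h
  · exact (step h hx).symm
  · exact step h hy

lemma isGenKIndep_cycleGraph_setOf_not_dvd (hk : 0 < k) :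
    IsGenKIndep (cycleGraph n) k {v : Fin n | ¬k ∣ v.val} := by
  set S := {v : Fin n | ¬k ∣ v.val}
  have hquot : ∀ {u w : S}, ((cycleGraph n).induce S).Reachable u w →
      u.1.val / k = w.1.val / k := by
    rintro u w ⟨p⟩
    induction p with
    | nil => rfl
    | @cons u v _ h _ ih => exact (div_eq_div_of_cycleGraph_adj h u.2 v.2).trans ih
  intro c
  have hmod : ∀ u : c.supp, u.1.1.val % k ≠ 0 := fun u h => u.1.2 (Nat.dvd_of_mod_eq_zero h)
  let f : c.supp → Fin (k - 1) := fun u => ⟨u.1.1.val % k - 1, by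
    have := Nat.mod_lt u.1.1.val hk
    have := hmod u
    omega⟩
  have hf : f.Injective := by
    intro u w huw
    have hrem : u.1.1.val % k = w.1.1.val % k := by
      have hsub : u.1.1.val % k - 1 = w.1.1.val % k - 1 := congrArg Fin.val huw
      have := hmod u
      have := hmod w
      omega
    have hdiv : u.1.1.val / k = w.1.1.val / k :=
      hquot (ConnectedComponent.eq.1 (u.2.trans w.2.symm))
    exact Subtype.ext (Subtype.ext (Fin.ext (by
      rw [← Nat.div_add_mod u.1.1.val k, hdiv, hrem, Nat.div_add_mod])))
  simpa using Nat.card_le_card_of_injective f hf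

lemma card_filter_range_add_one_dvd (m k : ℕ) : #{e ∈ range (m + 1) | k ∣ e} = m / k + 1 := by
  induction m with
  | zero => simp [filter_singleton]
  | succ m ih =>
    rw [range_add_one, filter_insert]
    by_cases h : k ∣ m + 1
    · rw [if_pos h, card_insert_of_notMem (by simp), ih, Nat.succ_div_of_dvd h]
    · rw [if_neg h, ih, Nat.succ_div_of_not_dvd h]

lemma ncard_setOf_dvd_val (m k : ℕ) : {v : Fin (m + 1) | k ∣ v.val}.ncard = m / k + 1 := by
  have himage : Fin.val '' {v : Fin (m + 1) | k ∣ v.val} = ↑{e ∈ range (m + 1) | k ∣ e} := by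
    ext e
    simp only [Set.mem_image, Set.mem_ofPred_eq, coe_filter, mem_range]
    exact ⟨fun ⟨v, hv, he⟩ => he ▸ ⟨v.isLt, hv⟩, fun ⟨he, hk⟩ => ⟨⟨e, he⟩, hk, rfl⟩⟩
  rw [← Set.ncard_image_of_injective _ Fin.val_injective, himage, Set.ncard_coe_finset,
    card_filter_range_add_one_dvd]

lemma ncard_setOf_not_dvd_val (m k : ℕ) : {v : Fin (m + 1) | ¬k ∣ v.val}.ncard = m - m / k := by
  have h := Set.ncard_add_ncard_compl {v : Fin (m + 1) | k ∣ v.val}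
  rw [Set.compl_ofPred, ncard_setOf_dvd_val, Nat.card_eq_fintype_card, Fintype.card_fin] at h
  omega

end Multiples

theorem alphaK_cycleGraph {m k : ℕ} (hk : 0 < k) (hkm : k ≤ m + 1) :
    alphaK (cycleGraph (m + 1)) k = m - m / k := by
  rw [← ncard_setOf_not_dvd_val]
  refine alphaK_eq_ncard (isGenKIndep_cycleGraph_setOf_not_dvd hk) fun T hT => ?_
  have hcompl := hT.le_ncard_compl_mul hk hkm
  have hlt : m / k < Tᶜ.ncard := (Nat.div_lt_iff_lt_mul hk).2 (by omega)
  have htot := T.ncard_add_ncard_compl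
  rw [Nat.card_eq_fintype_card, Fintype.card_fin] at htot
  rw [ncard_setOf_not_dvd_val]
  omega

lemma Nat.add_one_mod_eq_one_iff_dvd {m k : ℕ} (hk : 2 ≤ k) : (m + 1) % k = 1 ↔ k ∣ m :=
  calc (m + 1) % k = 1 ↔ m + 1 ≡ 0 + 1 [MOD k] := by
        rw [zero_add, Nat.ModEq, Nat.mod_eq_of_lt (by omega : 1 < k)]
    _ ↔ m ≡ 0 [MOD k] := ⟨Nat.ModEq.add_right_cancel' 1, fun h => h.add_right 1⟩
    _ ↔ k ∣ m := Nat.modEq_zero_iff_dvd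

lemma dvd_of_natCast_eq_sub_one_div_mul {a k m : ℕ} (hk : 1 ≤ k)
    (h : (a : ℚ) = ((k : ℚ) - 1) / k * m) : k ∣ m := by
  have hQ : ((a * k : ℕ) : ℚ) = ((k - 1) * m : ℕ) := by
    push_cast [Nat.cast_sub hk, h]
    field_simp
  have hcop : k.Coprime (k - 1) := (Nat.coprime_self_sub_right hk).2 k.coprime_one_right
  exact hcop.dvd_of_dvd_mul_left ⟨a, by rw [← Nat.cast_injective hQ, mul_comm]⟩

/-- For `k ≥ 2` and `n ≥ 3`, the cycle `C_n` satisfies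
`α_k(C_n) = ((k-1)/k)·(n-1)` if and only if `n ≡ 1 (mod k)`. -/
theorem alphaK_cycleGraph_eq_iff (k n : ℕ) (hk : 2 ≤ k) (hn : 3 ≤ n) :
    (alphaK (cycleGraph n) k : ℚ) = ((k : ℚ) - 1) / k * ((n : ℚ) - 1) ↔ n % k = 1 := by
  obtain ⟨m, rfl⟩ : ∃ m, n = m + 1 := ⟨n - 1, by omega⟩
  rw [Nat.add_one_mod_eq_one_iff_dvd hk, Nat.cast_add_one, add_sub_cancel_right]
  refine ⟨dvd_of_natCast_eq_sub_one_div_mul (by omega), ?_⟩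
  rintro ⟨q, rfl⟩
  have hq : q ≠ 0 := by
    rintro rfl
    omega
  rw [alphaK_cycleGraph (by omega) (Nat.le_add_right_of_le (Nat.le_mul_of_pos_right k (by omega))),
    Nat.mul_div_cancel_left _ (by omega), ← Nat.sub_one_mul]
  push_cast [Nat.cast_sub (by omega : 1 ≤ k)]
  field_simp
end
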